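/- arXiv:2506.24048 — 2 statements merged into one kernel-verified Lean document; each statement's English description precedes it below -/
import Mathlib

section
/- Let d ∈ ℕ and let f : ℝ^d → ℝ be twice continuously differentiable with sup_{x∈ℝ^d} ‖D²f(x)‖ ≤ M < ∞. Then there exists a constant C > 0, depending only on d and M, such that for all μ ∈ ℝ^d and all τ > 0, η > 0, setting σ := √(τ/η), one has ‖ η σ ∫ f(μ + σξ) ξ dπ(ξ) − τ ∇f(μ) ‖ ≤ C √(τ³/η). -/
open MeasureTheory ProbabilityTheory

/-- The standard Gaussian measure `N(0, I_{d×d})` on `ℝ^d`. -/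
noncomputable def stdGaussian (d : ℕ) : Measure (EuclideanSpace ℝ (Fin d)) :=
  Measure.map (⇑(EuclideanSpace.equiv (Fin d) ℝ).symm)
    (Measure.pi fun _ : Fin d => gaussianReal 0 1)

section Auxiliary

open Real
open scoped ENNReal NNReal

noncomputable def stdG : Measure ℝ := gaussianReal 0 1

lemma stdG_eq : stdG = (volume : Measure ℝ).withDensity
    (fun x => ENNReal.ofReal (gaussianPDFReal 0 1 x)) := by
  rw [stdG, gaussianReal_of_var_ne_zero _ one_ne_zero]
  rfl

lemma gaussianPDFReal_nonneg' (x : ℝ) : 0 ≤ gaussianPDFReal 0 1 x :=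
  gaussianPDFReal_nonneg 0 1 x

lemma integral_stdG (g : ℝ → ℝ) :
    ∫ x, g x ∂stdG = ∫ x, gaussianPDFReal 0 1 x * g x := by
  rw [stdG_eq]
  have h : (fun x => ENNReal.ofReal (gaussianPDFReal 0 1 x))
      = (fun x => ((gaussianPDFReal 0 1 x).toNNReal : ℝ≥0∞)) := rfl
  rw [h, integral_withDensity_eq_integral_smul
    ((measurable_gaussianPDFReal 0 1).real_toNNReal)]
  congr 1; ext x
  simp [NNReal.smul_def, Real.coe_toNNReal _ (gaussianPDFReal_nonneg' x), smul_eq_mul]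

lemma integrable_stdG_iff (g : ℝ → ℝ) :
    Integrable g stdG ↔ Integrable (fun x => gaussianPDFReal 0 1 x * g x) := by
  rw [stdG_eq]
  have h : (fun x => ENNReal.ofReal (gaussianPDFReal 0 1 x))
      = (fun x => ((gaussianPDFReal 0 1 x).toNNReal : ℝ≥0∞)) := rfl
  rw [h, integrable_withDensity_iff_integrable_smul
    ((measurable_gaussianPDFReal 0 1).real_toNNReal)]
  constructor <;> intro hi <;> [skip; skip] <;>
  · refine hi.congr (Filter.Eventually.of_forall fun x => ?_)
    simp [NNReal.smul_def, Real.coe_toNNReal _ (gaussianPDFReal_nonneg' x), smul_eq_mul]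

lemma gaussianPDFReal_eq (x : ℝ) :
    gaussianPDFReal 0 1 x = (Real.sqrt (2 * π))⁻¹ * Real.exp (-(2⁻¹) * x ^ 2) := by
  rw [gaussianPDFReal]
  norm_num
  left
  ring_nf

lemma pow_le_factorial_mul_exp {t : ℝ} (ht : 0 ≤ t) (n : ℕ) :
    t ^ n ≤ (n.factorial : ℝ) * Real.exp t := by
  have h1 : t ^ n / n.factorial ≤ ∑ i ∈ Finset.range (n + 1), t ^ i / i.factorial := by
    refine Finset.single_le_sum (f := fun i => t ^ i / (i.factorial : ℝ))
      (fun i _ => by positivity) (Finset.self_mem_range_succ n)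
  have h2 := Real.sum_le_exp_of_nonneg ht (n + 1)
  have h3 : (0:ℝ) < n.factorial := by exact_mod_cast n.factorial_pos
  rw [div_le_iff₀ h3] at *
  nlinarith [h1, h2]

lemma pdf_exp_bound (x : ℝ) :
    gaussianPDFReal 0 1 x * Real.exp |x| ≤
      ((Real.sqrt (2 * π))⁻¹ * Real.exp 1) * Real.exp (-(4⁻¹) * x ^ 2) := by
  rw [gaussianPDFReal_eq, mul_assoc, ← Real.exp_add, mul_assoc, ← Real.exp_add]
  refine mul_le_mul_of_nonneg_left (Real.exp_le_exp.mpr ?_) (by positivity)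
  nlinarith [sq_abs x, sq_nonneg (|x| - 2)]

lemma integrable_pdf_mul_pow (n : ℕ) :
    Integrable (fun x => gaussianPDFReal 0 1 x * |x| ^ n) := by
  refine Integrable.mono' (((integrable_exp_neg_mul_sq (by norm_num : (0:ℝ) < 4⁻¹)).const_mul
      ((Real.sqrt (2 * π))⁻¹ * Real.exp 1 * n.factorial))) ?_
      (Filter.Eventually.of_forall fun x => ?_)
  · refine Continuous.aestronglyMeasurable ?_
    have : Continuous (gaussianPDFReal 0 1) := by
      unfold gaussianPDFReal; fun_prop
    fun_prop
  · rw [Real.norm_eq_abs, abs_of_nonneg (mul_nonneg (gaussianPDFReal_nonneg' x) (by positivity))]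
    calc gaussianPDFReal 0 1 x * |x| ^ n
        ≤ gaussianPDFReal 0 1 x * ((n.factorial : ℝ) * Real.exp |x|) :=
          mul_le_mul_of_nonneg_left (pow_le_factorial_mul_exp (abs_nonneg x) n)
            (gaussianPDFReal_nonneg' x)
      _ = (gaussianPDFReal 0 1 x * Real.exp |x|) * n.factorial := by ring
      _ ≤ (((Real.sqrt (2 * π))⁻¹ * Real.exp 1) * Real.exp (-(4⁻¹) * x ^ 2)) * n.factorial :=
          mul_le_mul_of_nonneg_right (pdf_exp_bound x) (by positivity)
      _ = (Real.sqrt (2 * π))⁻¹ * Real.exp 1 * n.factorial * Real.exp (-(4⁻¹) * x ^ 2) := by ring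

lemma integrable_pow_stdG (n : ℕ) : Integrable (fun x => |x| ^ n) stdG := by
  rw [integrable_stdG_iff]
  exact integrable_pdf_mul_pow n

lemma integral_id_stdG : ∫ x, x ∂stdG = 0 := by
  rw [integral_stdG]
  refine integral_eq_zero_of_hasDerivAt_of_integrable
    (f := fun x => -((Real.sqrt (2 * π))⁻¹ * Real.exp (-(2⁻¹) * x ^ 2)))
    (fun x => ?_) ?_ ?_
  · have h1 : HasDerivAt (fun x : ℝ => -(2⁻¹) * x ^ 2) (-(2⁻¹) * (2 * x)) x := by
      simpa using (hasDerivAt_pow 2 x).const_mul (-(2⁻¹ : ℝ))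
    have := (h1.exp.const_mul (Real.sqrt (2 * π))⁻¹).neg
    convert this using 1
    · rfl
    rw [gaussianPDFReal_eq]
    ring
  · refine ((integrable_pdf_mul_pow 1).mono' ?_ (Filter.Eventually.of_forall fun x => ?_))
    · have : Continuous (gaussianPDFReal 0 1) := by unfold gaussianPDFReal; fun_prop
      exact (this.mul continuous_id).aestronglyMeasurable
    · rw [Real.norm_eq_abs, abs_mul, pow_one,
        abs_of_nonneg (gaussianPDFReal_nonneg' x)]
  · refine (((integrable_exp_neg_mul_sq (by norm_num : (0:ℝ) < 2⁻¹)).const_mul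
      (Real.sqrt (2 * π))⁻¹).neg).congr (Filter.Eventually.of_forall fun x => ?_)
    simp only [Pi.neg_apply]

lemma integral_sq_stdG : ∫ x, x ^ 2 ∂stdG = 1 := by
  rw [integral_stdG]
  have hpdf : Integrable (fun x => gaussianPDFReal 0 1 x) := integrable_gaussianPDFReal 0 1
  have hsq : Integrable (fun x => gaussianPDFReal 0 1 x * x ^ 2) := by
    refine (integrable_pdf_mul_pow 2).congr (Filter.Eventually.of_forall fun x => by
      show gaussianPDFReal 0 1 x * |x| ^ 2 = gaussianPDFReal 0 1 x * x ^ 2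
      rw [sq_abs])
  have key : ∫ x, (gaussianPDFReal 0 1 x * x ^ 2 - gaussianPDFReal 0 1 x) = 0 := by
    refine integral_eq_zero_of_hasDerivAt_of_integrable
      (f := fun x => -((Real.sqrt (2 * π))⁻¹ * (x * Real.exp (-(2⁻¹) * x ^ 2))))
      (fun x => ?_) (hsq.sub hpdf) ?_
    · have h1 : HasDerivAt (fun x : ℝ => -(2⁻¹) * x ^ 2) (-(2⁻¹) * (2 * x)) x := by
        simpa using (hasDerivAt_pow 2 x).const_mul (-(2⁻¹ : ℝ))
      have h2 : HasDerivAt (fun x : ℝ => x * Real.exp (-(2⁻¹) * x ^ 2))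
          (1 * Real.exp (-(2⁻¹) * x ^ 2) + x * (Real.exp (-(2⁻¹) * x ^ 2) * (-(2⁻¹) * (2 * x)))) x :=
        (hasDerivAt_id x).mul h1.exp
      have := (h2.const_mul (Real.sqrt (2 * π))⁻¹).neg
      convert this using 1
      · rfl
      simp only [gaussianPDFReal_eq]
      ring
    · refine (((integrable_mul_exp_neg_mul_sq (by norm_num : (0:ℝ) < 2⁻¹)).const_mul
        (Real.sqrt (2 * π))⁻¹).neg).congr (Filter.Eventually.of_forall fun x => ?_)
      simp only [Pi.neg_apply]
  have := integral_sub hsq hpdf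
  rw [key] at this
  have h1 : ∫ x, gaussianPDFReal 0 1 x = 1 := integral_gaussianPDFReal_eq_one 0 one_ne_zero
  linarith [this, h1]

lemma integral_one_stdG : ∫ _x, (1:ℝ) ∂stdG = 1 := by
  simp [stdG]

lemma integrable_exp_abs_stdG : Integrable (fun x => Real.exp |x|) stdG := by
  rw [integrable_stdG_iff]
  refine Integrable.mono' (((integrable_exp_neg_mul_sq (by norm_num : (0:ℝ) < 4⁻¹)).const_mul
      ((Real.sqrt (2 * π))⁻¹ * Real.exp 1))) ?_ (Filter.Eventually.of_forall fun x => ?_)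
  · have : Continuous (gaussianPDFReal 0 1) := by unfold gaussianPDFReal; fun_prop
    exact (this.mul (Real.continuous_exp.comp continuous_abs)).aestronglyMeasurable
  · rw [Real.norm_eq_abs, abs_of_nonneg (mul_nonneg (gaussianPDFReal_nonneg' x)
      (Real.exp_pos _).le)]
    exact pdf_exp_bound x

section piG

noncomputable def piG (d : ℕ) : MeasureTheory.Measure (Fin d → ℝ) :=
  MeasureTheory.Measure.pi fun _ => stdG

instance : MeasureTheory.IsProbabilityMeasure stdG := by
  rw [stdG]; infer_instance

section localinst
noncomputable local instance stdGMS : MeasureTheory.MeasureSpace ℝ := ⟨stdG⟩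
local instance : MeasureTheory.SigmaFinite (MeasureTheory.volume : MeasureTheory.Measure ℝ) :=
  inferInstanceAs (MeasureTheory.SigmaFinite stdG)

lemma piG_integrable_prod {d : ℕ} (f : Fin d → ℝ → ℝ) (hf : ∀ i, MeasureTheory.Integrable (f i) stdG) :
    MeasureTheory.Integrable (fun x : Fin d → ℝ => ∏ i, f i (x i)) (piG d) :=
  MeasureTheory.Integrable.fintype_prod (f := f) hf

lemma piG_integral_prod {d : ℕ} (f : Fin d → ℝ → ℝ) :
    ∫ x, ∏ i, f i (x i) ∂(piG d) = ∏ i, ∫ x, f i x ∂stdG :=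
  MeasureTheory.integral_fintype_prod_eq_prod (fun _ => f _)

end localinst
end piG

open MeasureTheory in
lemma integrable_id_stdG : Integrable (fun t : ℝ => t) stdG := by
  refine (integrable_pow_stdG 1).mono' ?_ (Filter.Eventually.of_forall fun x => by simp)
  exact (continuous_id).aestronglyMeasurable

open MeasureTheory in
lemma integrable_mul_self_stdG : Integrable (fun t : ℝ => t * t) stdG := by
  refine (integrable_pow_stdG 2).mono' ?_ (Filter.Eventually.of_forall fun x => by
    rw [Real.norm_eq_abs, abs_mul, ← pow_two])
  exact (continuous_id.mul continuous_id).aestronglyMeasurable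

open MeasureTheory in
lemma stdG_integral_ite (i j k : Fin d) :
    ∫ t, (if k = i then t else 1) * (if k = j then t else 1) ∂stdG
      = if k = i then (if k = j then 1 else 0) else (if k = j then 0 else 1) := by
  by_cases hki : k = i
  · subst hki
    by_cases hkj : k = j
    · subst hkj
      simp only [if_pos rfl]
      simpa [← sq] using integral_sq_stdG
    · simp only [if_pos rfl, if_neg hkj, mul_one]
      exact integral_id_stdG
  · by_cases hkj : k = j
    · subst hkj
      simp only [if_neg hki, eq_self_iff_true, if_true, one_mul]
      exact integral_id_stdG
    · simp [if_neg hki, if_neg hkj]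

open MeasureTheory in
lemma piG_integral_coord {d : ℕ} (i : Fin d) : ∫ x, x i ∂(piG d) = 0 := by
  have h : (fun x : Fin d → ℝ => x i) = fun x => ∏ k, (if k = i then x k else 1) := by
    funext x; rw [Finset.prod_ite_eq']; simp
  rw [h, piG_integral_prod (f := fun k t => if k = i then t else 1)]
  refine Finset.prod_eq_zero (Finset.mem_univ i) ?_
  simpa using integral_id_stdG

open MeasureTheory in
lemma piG_integral_coord_mul {d : ℕ} (i j : Fin d) :
    ∫ x, x i * x j ∂(piG d) = if i = j then 1 else 0 := by
  have h : (fun x : Fin d → ℝ => x i * x j)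
      = fun x => ∏ k, ((if k = i then x k else 1) * (if k = j then x k else 1)) := by
    funext x
    rw [Finset.prod_mul_distrib, Finset.prod_ite_eq', Finset.prod_ite_eq']
    simp
  rw [h, piG_integral_prod (f := fun k t => (if k = i then t else 1) * (if k = j then t else 1))]
  rw [Finset.prod_congr rfl fun k _ => stdG_integral_ite i j k]
  by_cases hij : i = j
  · subst hij
    rw [if_pos rfl]
    refine Finset.prod_eq_one fun k _ => ?_
    by_cases h : k = i <;> simp [h]
  · rw [if_neg hij]
    refine Finset.prod_eq_zero (Finset.mem_univ i) ?_
    simp [hij]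

noncomputable def eucME (d : ℕ) : (Fin d → ℝ) ≃ᵐ EuclideanSpace ℝ (Fin d) :=
  ((EuclideanSpace.equiv (Fin d) ℝ).symm.toHomeomorph).toMeasurableEquiv

lemma stdGaussian_eq_map (d : ℕ) : stdGaussian d = Measure.map (⇑(eucME d)) (piG d) := rfl

instance (d : ℕ) : IsProbabilityMeasure (stdGaussian d) := by
  rw [stdGaussian_eq_map]
  have : IsProbabilityMeasure (piG d) := by
    rw [piG]; infer_instance
  exact Measure.isProbabilityMeasure_map (eucME d).measurable.aemeasurable

lemma integral_stdGaussian {F : Type*} [NormedAddCommGroup F] [NormedSpace ℝ F]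
    (d : ℕ) (g : EuclideanSpace ℝ (Fin d) → F) :
    ∫ ξ, g ξ ∂(stdGaussian d) = ∫ x, g (eucME d x) ∂(piG d) := by
  rw [stdGaussian_eq_map]
  exact integral_map_equiv (eucME d) g

lemma integrable_stdGaussian_iff {F : Type*} [NormedAddCommGroup F]
    (d : ℕ) (g : EuclideanSpace ℝ (Fin d) → F) :
    Integrable g (stdGaussian d) ↔ Integrable (fun x => g (eucME d x)) (piG d) := by
  rw [stdGaussian_eq_map]
  exact integrable_map_equiv (eucME d) g

lemma eucME_coord (d : ℕ) (x : Fin d → ℝ) (i : Fin d) : (eucME d x) i = x i := rfl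

lemma norm_eucME_le (d : ℕ) (x : Fin d → ℝ) : ‖eucME d x‖ ≤ ∑ i, |x i| := by
  rw [EuclideanSpace.norm_eq]
  have h1 : ∑ i, ‖(eucME d x) i‖ ^ 2 ≤ (∑ i, |x i|) ^ 2 := by
    simp only [eucME_coord, Real.norm_eq_abs]
    exact Finset.sum_sq_le_sq_sum_of_nonneg fun i _ => abs_nonneg _
  calc Real.sqrt (∑ i, ‖(eucME d x) i‖ ^ 2) ≤ Real.sqrt ((∑ i, |x i|) ^ 2) :=
        Real.sqrt_le_sqrt h1
    _ = ∑ i, |x i| := Real.sqrt_sq (Finset.sum_nonneg fun i _ => abs_nonneg _)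

lemma stdGaussian_moment (d n : ℕ) :
    Integrable (fun ξ => ‖ξ‖ ^ n) (stdGaussian d) := by
  rw [integrable_stdGaussian_iff]
  have hdom : Integrable (fun x : Fin d → ℝ => (n.factorial : ℝ) * ∏ i, Real.exp |x i|)
      (piG d) :=
    (piG_integrable_prod (fun _ t => Real.exp |t|) fun i => integrable_exp_abs_stdG).const_mul _
  refine hdom.mono' ?_ (Filter.Eventually.of_forall fun x => ?_)
  · refine Continuous.aestronglyMeasurable ?_
    have : Continuous (fun x : Fin d → ℝ => eucME d x) :=
      (EuclideanSpace.equiv (Fin d) ℝ).symm.continuous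
    fun_prop
  · rw [Real.norm_eq_abs, abs_pow, abs_norm]
    calc ‖eucME d x‖ ^ n ≤ (∑ i, |x i|) ^ n :=
          pow_le_pow_left₀ (norm_nonneg _) (norm_eucME_le d x) n
      _ ≤ (n.factorial : ℝ) * Real.exp (∑ i, |x i|) :=
          pow_le_factorial_mul_exp (Finset.sum_nonneg fun i _ => abs_nonneg _) n
      _ = (n.factorial : ℝ) * ∏ i, Real.exp |x i| := by rw [Real.exp_sum]

lemma integrable_id_stdGaussian (d : ℕ) :
    Integrable (fun ξ : EuclideanSpace ℝ (Fin d) => ξ) (stdGaussian d) := by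
  refine (stdGaussian_moment d 1).mono' continuous_id.aestronglyMeasurable
    (Filter.Eventually.of_forall fun ξ => by simp)

lemma integral_id_stdGaussian (d : ℕ) :
    ∫ ξ, ξ ∂(stdGaussian d) = (0 : EuclideanSpace ℝ (Fin d)) := by
  have hInt := integrable_id_stdGaussian d
  ext j
  have h := (EuclideanSpace.proj j (𝕜 := ℝ)).integral_comp_comm hInt
  have h2 : integral (stdGaussian d) (fun ξ : EuclideanSpace ℝ (Fin d) => ξ) j
      = EuclideanSpace.proj j (𝕜 := ℝ) (∫ ξ, ξ ∂(stdGaussian d)) := rfl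
  rw [h2, ← h, integral_stdGaussian d (fun ξ => EuclideanSpace.proj j (𝕜 := ℝ) ξ)]
  have h3 : (fun x : Fin d → ℝ => (EuclideanSpace.proj j (𝕜 := ℝ)) (eucME d x))
      = fun x => x j := rfl
  rw [h3, piG_integral_coord j]
  rfl

open MeasureTheory in
lemma piG_integrable_coord_mul {d : ℕ} (i j : Fin d) :
    Integrable (fun x : Fin d → ℝ => x i * x j) (piG d) := by
  have h : (fun x : Fin d → ℝ => x i * x j)
      = fun x => ∏ k, ((if k = i then x k else 1) * (if k = j then x k else 1)) := by
    funext x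
    rw [Finset.prod_mul_distrib, Finset.prod_ite_eq', Finset.prod_ite_eq']
    simp
  rw [h]
  refine piG_integrable_prod (fun k t => (if k = i then t else 1) * (if k = j then t else 1))
    fun k => ?_
  by_cases hki : k = i
  · subst hki
    by_cases hkj : k = j
    · subst hkj
      simp only [if_pos rfl]
      exact integrable_mul_self_stdG
    · simp only [if_pos rfl, if_neg hkj, mul_one]
      exact integrable_id_stdG
  · by_cases hkj : k = j
    · subst hkj
      simp only [if_neg hki, eq_self_iff_true, if_true, one_mul]
      exact integrable_id_stdG
    · simp only [if_neg hki, if_neg hkj, mul_one]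
      exact integrable_const 1

open MeasureTheory in
lemma integrable_inner_smul_stdGaussian (d : ℕ) (v : EuclideanSpace ℝ (Fin d)) :
    Integrable (fun ξ : EuclideanSpace ℝ (Fin d) =>
      (inner ℝ v ξ : ℝ) • ξ) (stdGaussian d) := by
  refine ((stdGaussian_moment d 2).const_mul ‖v‖).mono'
    (((innerSL ℝ v).continuous.smul continuous_id).aestronglyMeasurable)
    (Filter.Eventually.of_forall fun ξ => ?_)
  rw [norm_smul, Real.norm_eq_abs]
  calc |(inner ℝ v ξ : ℝ)| * ‖ξ‖ ≤ ‖v‖ * ‖ξ‖ * ‖ξ‖ :=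
        mul_le_mul_of_nonneg_right (abs_real_inner_le_norm v ξ) (norm_nonneg ξ)
    _ = ‖v‖ * ‖ξ‖ ^ 2 := by ring

open MeasureTheory in
lemma stdGaussian_inner_smul (d : ℕ) (v : EuclideanSpace ℝ (Fin d)) :
    ∫ ξ, (inner ℝ v ξ : ℝ) • ξ ∂(stdGaussian d) = v := by
  have hInt := integrable_inner_smul_stdGaussian d v
  ext j
  have h := (EuclideanSpace.proj j (𝕜 := ℝ)).integral_comp_comm hInt
  have h2 : integral (stdGaussian d) (fun ξ : EuclideanSpace ℝ (Fin d) => (inner ℝ v ξ : ℝ) • ξ) j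
      = EuclideanSpace.proj j (𝕜 := ℝ)
          (∫ ξ, (inner ℝ v ξ : ℝ) • ξ ∂(stdGaussian d)) := rfl
  rw [h2, ← h,
    integral_stdGaussian d (fun ξ => EuclideanSpace.proj j (𝕜 := ℝ) ((inner ℝ v ξ : ℝ) • ξ))]
  have h3 : (fun x : Fin d → ℝ =>
      (EuclideanSpace.proj j (𝕜 := ℝ)) ((inner ℝ v (eucME d x) : ℝ) • (eucME d x)))
      = fun x => ∑ i, v i * (x i * x j) := by
    funext x
    have : (inner ℝ v (eucME d x) : ℝ) = ∑ i, v i * x i := by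
      simp [PiLp.inner_apply, RCLike.inner_apply, conj_trivial, eucME_coord]
      exact Finset.sum_congr rfl fun i _ => mul_comm _ _
    show (inner ℝ v (eucME d x) : ℝ) * x j = _
    rw [this, Finset.sum_mul]
    exact Finset.sum_congr rfl fun i _ => by ring
  rw [h3, integral_finset_sum _ fun i _ => (piG_integrable_coord_mul i j).const_mul (v i)]
  have h4 : ∀ i : Fin d, ∫ x, v i * (x i * x j) ∂(piG d) = v i * if i = j then 1 else 0 := by
    intro i
    rw [integral_const_mul, piG_integral_coord_mul i j]
  rw [Finset.sum_congr rfl fun i _ => h4 i]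
  simp

lemma taylor_bound {E : Type*} [NormedAddCommGroup E] [NormedSpace ℝ E] (f : E → ℝ)
    (hf : ContDiff ℝ 2 f) {M : ℝ} (hM : ∀ x, ‖fderiv ℝ (fderiv ℝ f) x‖ ≤ M)
    (x y : E) : ‖f y - f x - fderiv ℝ f x (y - x)‖ ≤ M * ‖y - x‖ * ‖y - x‖ := by
  have hM0 : 0 ≤ M := le_trans (norm_nonneg (fderiv ℝ (fderiv ℝ f) x)) (hM x)
  have hd1 : Differentiable ℝ f := hf.differentiable (by norm_num)
  have hfd : ContDiff ℝ 1 (fderiv ℝ f) := hf.fderiv_right (by norm_num)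
  have hlip : ∀ z : E, ‖fderiv ℝ f z - fderiv ℝ f x‖ ≤ M * ‖z - x‖ := by
    intro z
    refine Convex.norm_image_sub_le_of_norm_fderiv_le
      (fun w _ => (hfd.differentiable one_ne_zero) w) (fun w _ => hM w) convex_univ
      (Set.mem_univ x) (Set.mem_univ z)
  have key := Convex.norm_image_sub_le_of_norm_fderiv_le' (𝕜 := ℝ)
    (f := f) (φ := fderiv ℝ f x) (s := Metric.closedBall x ‖y - x‖)
    (C := M * ‖y - x‖)
    (fun w _ => hd1 w)
    (fun w hw => by
      refine le_trans (hlip w) (mul_le_mul_of_nonneg_left ?_ hM0)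
      simpa [dist_eq_norm] using hw)
    (convex_closedBall x ‖y - x‖)
    (Metric.mem_closedBall_self (norm_nonneg _))
    (Metric.mem_closedBall.mpr (le_of_eq (dist_eq_norm y x)))
  exact key


end Auxiliary

/-- **Proposition 1, first statement.** If `f : ℝ^d → ℝ` is `C²` with
`‖D²f‖ ≤ M` everywhere, then there is a constant `C > 0` depending only on `d` and `M`
such that for all `μ`, `τ > 0`, `η > 0`, setting `σ = √(τ/η)`,
`‖ησ ∫ f(μ+σξ) ξ dπ(ξ) − τ∇f(μ)‖ ≤ C √(τ³/η)`. -/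
theorem gaussian_nes_gradient_approx (d : ℕ) (M : ℝ) :
    ∃ C : ℝ, 0 < C ∧
      ∀ f : EuclideanSpace ℝ (Fin d) → ℝ, ContDiff ℝ 2 f →
        (∀ x, ‖fderiv ℝ (fderiv ℝ f) x‖ ≤ M) →
        ∀ (μ : EuclideanSpace ℝ (Fin d)) (τ η : ℝ), 0 < τ → 0 < η →
          ‖(η * Real.sqrt (τ / η)) •
              (∫ ξ, f (μ + Real.sqrt (τ / η) • ξ) • ξ ∂(stdGaussian d))
            - τ • gradient f μ‖ ≤ C * Real.sqrt (τ ^ 3 / η) := by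
  set K : ℝ := ∫ ξ, ‖ξ‖ ^ 3 ∂(stdGaussian d) with hK
  have hK0 : 0 ≤ K := integral_nonneg fun ξ => by positivity
  refine ⟨K * |M| + 1, by positivity, ?_⟩
  intro f hf hM μ τ η hτ hη
  have hM0 : 0 ≤ M := le_trans (norm_nonneg (fderiv ℝ (fderiv ℝ f) μ)) (hM μ)
  set σ : ℝ := Real.sqrt (τ / η) with hσdef
  have hτη : 0 < τ / η := div_pos hτ hη
  have hσpos : 0 < σ := Real.sqrt_pos.mpr hτη
  have hσ2 : σ ^ 2 = τ / η := Real.sq_sqrt hτη.le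
  set v : EuclideanSpace ℝ (Fin d) := gradient f μ with hv
  have hLv : ∀ ξ, fderiv ℝ f μ ξ = (inner ℝ v ξ : ℝ) := by
    intro ξ
    rw [hv, gradient, InnerProductSpace.toDual_symm_apply]
  set R : EuclideanSpace ℝ (Fin d) → ℝ :=
    fun ξ => f (μ + σ • ξ) - f μ - σ * (inner ℝ v ξ : ℝ) with hRdef
  have hR : ∀ ξ, |R ξ| ≤ M * σ ^ 2 * ‖ξ‖ ^ 2 := by
    intro ξ
    have h := taylor_bound f hf hM μ (μ + σ • ξ)
    rw [add_sub_cancel_left, ContinuousLinearMap.map_smul] at h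
    have h2 : |R ξ| = ‖f (μ + σ • ξ) - f μ - σ • fderiv ℝ f μ ξ‖ := by
      rw [hRdef, Real.norm_eq_abs, smul_eq_mul, hLv ξ]
    rw [h2]
    refine le_trans h ?_
    rw [norm_smul, Real.norm_eq_abs, abs_of_pos hσpos]
    nlinarith [norm_nonneg ξ, hσpos]
  have hRcont : Continuous R := by
    have hfc : Continuous f := hf.continuous
    have h1 : Continuous fun ξ : EuclideanSpace ℝ (Fin d) => f (μ + σ • ξ) :=
      hfc.comp (continuous_const.add (continuous_id.const_smul σ))
    have h2 : Continuous fun ξ : EuclideanSpace ℝ (Fin d) => (inner ℝ v ξ : ℝ) :=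
      (innerSL ℝ v).continuous
    rw [hRdef]
    fun_prop
  -- integrability of the three pieces
  have hg1 : Integrable (fun ξ : EuclideanSpace ℝ (Fin d) => f μ • ξ) (stdGaussian d) :=
    (integrable_id_stdGaussian d).smul (f μ)
  have hg2 : Integrable (fun ξ : EuclideanSpace ℝ (Fin d) =>
      (σ * (inner ℝ v ξ : ℝ)) • ξ) (stdGaussian d) := by
    refine ((integrable_inner_smul_stdGaussian d v).smul σ).congr
      (Filter.Eventually.of_forall fun ξ => ?_)
    show σ • ((inner ℝ v ξ : ℝ) • ξ) = _
    rw [smul_smul]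
  have hg3 : Integrable (fun ξ : EuclideanSpace ℝ (Fin d) => R ξ • ξ) (stdGaussian d) := by
    refine ((stdGaussian_moment d 3).const_mul (M * σ ^ 2)).mono'
      (hRcont.smul continuous_id).aestronglyMeasurable
      (Filter.Eventually.of_forall fun ξ => ?_)
    rw [norm_smul, Real.norm_eq_abs]
    calc |R ξ| * ‖ξ‖ ≤ (M * σ ^ 2 * ‖ξ‖ ^ 2) * ‖ξ‖ :=
          mul_le_mul_of_nonneg_right (hR ξ) (norm_nonneg _)
      _ = M * σ ^ 2 * ‖ξ‖ ^ 3 := by ring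
  have hsum : (fun ξ : EuclideanSpace ℝ (Fin d) => f (μ + σ • ξ) • ξ)
      = fun ξ => f μ • ξ + (σ * (inner ℝ v ξ : ℝ)) • ξ + R ξ • ξ := by
    funext ξ
    rw [← add_smul, ← add_smul]
    congr 1
    rw [hRdef]
    ring
  have hsplit : ∫ ξ, f (μ + σ • ξ) • ξ ∂(stdGaussian d)
      = σ • v + ∫ ξ, R ξ • ξ ∂(stdGaussian d) := by
    have hg12 : Integrable (fun ξ : EuclideanSpace ℝ (Fin d) =>
        f μ • ξ + (σ * (inner ℝ v ξ : ℝ)) • ξ) (stdGaussian d) := hg1.add hg2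
    rw [hsum, integral_add hg12 hg3, integral_add hg1 hg2]
    have e1 : ∫ ξ, f μ • ξ ∂(stdGaussian d) = 0 := by
      rw [integral_smul, _root_.integral_id_stdGaussian, smul_zero]
    have e2 : ∫ ξ, (σ * (inner ℝ v ξ : ℝ)) • ξ ∂(stdGaussian d) = σ • v := by
      have : (fun ξ : EuclideanSpace ℝ (Fin d) => (σ * (inner ℝ v ξ : ℝ)) • ξ)
          = fun ξ => σ • ((inner ℝ v ξ : ℝ) • ξ) := by
        funext ξ; rw [smul_smul]
      rw [this, integral_smul, stdGaussian_inner_smul]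
    rw [e1, e2, zero_add]
  set I3 : EuclideanSpace ℝ (Fin d) := ∫ ξ, R ξ • ξ ∂(stdGaussian d) with hI3
  have hmain : (η * σ) • (∫ ξ, f (μ + σ • ξ) • ξ ∂(stdGaussian d)) - τ • v
      = (η * σ) • I3 := by
    rw [hsplit, smul_add]
    have : (η * σ) • (σ • v) = τ • v := by
      rw [smul_smul]
      congr 1
      rw [mul_assoc, ← sq, hσ2, mul_div_cancel₀ _ hη.ne']
    rw [this]
    abel
  rw [hmain]
  -- norm bound
  have hnorm : ‖I3‖ ≤ M * σ ^ 2 * K := by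
    refine le_trans (norm_integral_le_integral_norm _) ?_
    have hb : ∫ ξ, ‖R ξ • ξ‖ ∂(stdGaussian d) ≤ ∫ ξ, (M * σ ^ 2) * ‖ξ‖ ^ 3 ∂(stdGaussian d) := by
      refine integral_mono hg3.norm ((stdGaussian_moment d 3).const_mul _) fun ξ => ?_
      rw [norm_smul, Real.norm_eq_abs]
      calc |R ξ| * ‖ξ‖ ≤ (M * σ ^ 2 * ‖ξ‖ ^ 2) * ‖ξ‖ :=
            mul_le_mul_of_nonneg_right (hR ξ) (norm_nonneg _)
        _ = (M * σ ^ 2) * ‖ξ‖ ^ 3 := by ring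
    rw [integral_const_mul] at hb
    exact le_trans hb (le_of_eq (by ring))
  have hsqrt : Real.sqrt (τ ^ 3 / η) = τ * σ := by
    rw [hσdef, show τ ^ 3 / η = τ ^ 2 * (τ / η) by ring, Real.sqrt_mul (sq_nonneg τ),
      Real.sqrt_sq hτ.le]
  rw [norm_smul, Real.norm_eq_abs, abs_of_pos (mul_pos hη hσpos)]
  calc (η * σ) * ‖I3‖ ≤ (η * σ) * (M * σ ^ 2 * K) :=
        mul_le_mul_of_nonneg_left hnorm (mul_pos hη hσpos).le
    _ = (K * M) * (τ * σ) := by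
        rw [hσ2]
        field_simp
    _ ≤ (K * |M| + 1) * (τ * σ) := by
        refine mul_le_mul_of_nonneg_right ?_ (mul_pos hτ hσpos).le
        have : K * M ≤ K * |M| := mul_le_mul_of_nonneg_left (le_abs_self M) hK0
        linarith
    _ = (K * |M| + 1) * Real.sqrt (τ ^ 3 / η) := by rw [hsqrt]
end

section
/- Let d ∈ ℕ and let f : ℝ^d → ℝ be twice continuously differentiable with sup_{x∈ℝ^d} ‖∇f(x)‖ ≤ G < ∞ and sup_{x∈ℝ^d} ‖D²f(x)‖ ≤ M < ∞. Then there exists a constant C > 0, depending only on d, such that for all c ∈ ℝ^d and all α > 0, σ̃ > 0 with α G σ̃ ≤ 1, one has | ∫ exp(−α f(c + σ̃ξ)) dπ(ξ) − exp(−α f(c)) | ≤ C exp(−α f(c)) · σ̃² (α² G² + α M). -/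
open MeasureTheory ProbabilityTheory

lemma abs_exp_sub_one_le' (x : ℝ) : |Real.exp x - 1| ≤ |x| * Real.exp |x| := by
  rcases le_or_gt 0 x with hx | hx
  · rw [abs_of_nonneg hx, abs_of_nonneg (by linarith [Real.one_le_exp hx] : (0:ℝ) ≤ Real.exp x - 1)]
    have key : Real.exp x * Real.exp (-x) = 1 := by rw [← Real.exp_add]; simp
    have h2 := mul_le_mul_of_nonneg_right (Real.add_one_le_exp (-x)) (Real.exp_pos x).le
    nlinarith
  · have h1 : Real.exp x < 1 := Real.exp_lt_one_iff.mpr hx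
    rw [abs_of_neg hx, abs_of_nonpos (by linarith : Real.exp x - 1 ≤ 0)]
    have h2 := Real.add_one_le_exp x
    have h3 := Real.one_le_exp (by linarith : (0:ℝ) ≤ -x)
    nlinarith

lemma abs_exp_sub_one_sub_le' (x : ℝ) : |Real.exp x - 1 - x| ≤ x ^ 2 * Real.exp |x| := by
  have hdiff : ∀ t : ℝ, HasDerivAt (fun y => Real.exp y - 1 - y) (Real.exp t - 1) t := by
    intro t
    exact ((Real.hasDerivAt_exp t).sub_const 1).sub (hasDerivAt_id' t)
  have key := (convex_uIcc (0:ℝ) x).norm_image_sub_le_of_norm_deriv_le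
    (fun t _ => (hdiff t).differentiableAt)
    (fun t ht => ?_) Set.left_mem_uIcc Set.right_mem_uIcc (C := |x| * Real.exp |x|)
  · simp only [Real.norm_eq_abs, Real.exp_zero, sub_zero, sub_self] at key
    calc |Real.exp x - 1 - x| ≤ |x| * Real.exp |x| * |x| := key
      _ = x ^ 2 * Real.exp |x| := by rw [mul_right_comm, ← sq_abs]; ring
  · have ht' : |t| ≤ |x| := by
      rcases le_total 0 x with h | h
      · rw [Set.uIcc_of_le (by linarith), Set.mem_Icc] at ht
        rw [abs_of_nonneg ht.1, abs_of_nonneg h]; exact ht.2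
      · rw [Set.uIcc_of_ge (by linarith), Set.mem_Icc] at ht
        rw [abs_of_nonpos ht.2, abs_of_nonpos h]; linarith [ht.1]
    rw [(hdiff t).deriv, Real.norm_eq_abs]
    calc |Real.exp t - 1| ≤ |t| * Real.exp |t| := abs_exp_sub_one_le' t
      _ ≤ |x| * Real.exp |x| :=
        mul_le_mul ht' (Real.exp_le_exp.mpr ht') (Real.exp_pos _).le (abs_nonneg _)

lemma sq_le_four_exp (t : ℝ) (ht : 0 ≤ t) : t ^ 2 ≤ 4 * Real.exp t := by
  have h : Real.exp t = Real.exp (t/2) * Real.exp (t/2) := by rw [← Real.exp_add]; ring_nf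
  nlinarith [Real.add_one_le_exp (t/2)]

lemma abs_le_exp_two_mul (t : ℝ) : |t| ≤ Real.exp (2 * |t|) := by
  have h1 := Real.add_one_le_exp |t|
  have h2 : Real.exp |t| ≤ Real.exp (2 * |t|) := Real.exp_le_exp.mpr (by nlinarith [abs_nonneg t])
  linarith [abs_nonneg t]


variable {d : ℕ}

lemma norm_fderiv_le_of_grad {f : EuclideanSpace ℝ (Fin d) → ℝ} {G : ℝ}
    (hG : ∀ x, ‖gradient f x‖ ≤ G) : ∀ x, ‖fderiv ℝ f x‖ ≤ G := by
  intro x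
  have h := hG x
  unfold gradient at h
  rwa [LinearIsometryEquiv.norm_map] at h

lemma mvt_bound {f : EuclideanSpace ℝ (Fin d) → ℝ} {G : ℝ} (hf : ContDiff ℝ 2 f)
    (hG : ∀ x, ‖fderiv ℝ f x‖ ≤ G) (x y : EuclideanSpace ℝ (Fin d)) :
    |f y - f x| ≤ G * ‖y - x‖ := by
  have := convex_univ.norm_image_sub_le_of_norm_fderiv_le
    (f := f) (fun w _ => (hf.differentiable (by norm_num)).differentiableAt)
    (fun w _ => hG w) (Set.mem_univ x) (Set.mem_univ y)
  simpa using this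

lemma taylor_two_bound {f : EuclideanSpace ℝ (Fin d) → ℝ} {M : ℝ} (hf : ContDiff ℝ 2 f)
    (hM : ∀ x, ‖fderiv ℝ (fderiv ℝ f) x‖ ≤ M) (x y : EuclideanSpace ℝ (Fin d)) :
    |f y - f x - fderiv ℝ f x (y - x)| ≤ M * ‖y - x‖ ^ 2 := by
  have hdf : ContDiff ℝ 1 (fderiv ℝ f) := hf.fderiv_right (by norm_num)
  have hlip : ∀ z : EuclideanSpace ℝ (Fin d), ‖fderiv ℝ f z - fderiv ℝ f x‖ ≤ M * ‖z - x‖ := by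
    intro z
    have := convex_univ.norm_image_sub_le_of_norm_fderiv_le
      (f := fderiv ℝ f) (fun w _ => (hdf.differentiable one_ne_zero).differentiableAt)
      (fun w _ => hM w) (Set.mem_univ x) (Set.mem_univ z)
    simpa using this
  set g : EuclideanSpace ℝ (Fin d) → ℝ := fun z => f z - fderiv ℝ f x z with hg
  have hgd : ∀ z, HasFDerivAt g (fderiv ℝ f z - fderiv ℝ f x) z := fun z =>
    ((hf.differentiable (by norm_num)).differentiableAt.hasFDerivAt).sub
      (fderiv ℝ f x).hasFDerivAt
  have hseg : ∀ z ∈ segment ℝ x y, ‖z - x‖ ≤ ‖y - x‖ := by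
    intro z hz
    obtain ⟨a, b, ha, hb, hab, rfl⟩ := hz
    have : a • x + b • y - x = b • (y - x) := by
      rw [show a = 1 - b by linarith]; module
    rw [this, norm_smul, Real.norm_eq_abs, abs_of_nonneg hb]
    nlinarith [norm_nonneg (y - x)]
  have hM0 : 0 ≤ M := le_trans (norm_nonneg (fderiv ℝ (fderiv ℝ f) x)) (hM x)
  have key := (convex_segment x y).norm_image_sub_le_of_norm_hasFDerivWithin_le
    (f := g) (f' := fun z => fderiv ℝ f z - fderiv ℝ f x)
    (fun z _ => (hgd z).hasFDerivWithinAt)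
    (C := M * ‖y - x‖)
    (fun z hz => le_trans (hlip z) (mul_le_mul_of_nonneg_left (hseg z hz) hM0))
    (left_mem_segment ℝ x y) (right_mem_segment ℝ x y)
  have hgy : g y - g x = f y - f x - fderiv ℝ f x (y - x) := by
    simp only [hg, map_sub]; ring
  rw [Real.norm_eq_abs, hgy] at key
  calc |f y - f x - fderiv ℝ f x (y - x)| ≤ M * ‖y - x‖ * ‖y - x‖ := key
    _ = M * ‖y - x‖ ^ 2 := by ring


open MeasureTheory ProbabilityTheory
open scoped ENNReal NNReal

lemma gauss_integrable_exp_two_abs :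
    Integrable (fun t : ℝ => Real.exp (2 * |t|)) (gaussianReal 0 1) := by
  rw [gaussianReal_of_var_ne_zero 0 one_ne_zero]
  rw [integrable_withDensity_iff (measurable_gaussianPDF 0 1)
    (Filter.Eventually.of_forall fun x => ENNReal.ofReal_lt_top)]
  have hb : Integrable (fun t : ℝ => ((Real.sqrt (2 * Real.pi))⁻¹ * Real.exp 4) *
      Real.exp (-(4:ℝ)⁻¹ * t ^ 2)) := (integrable_exp_neg_mul_sq (by norm_num)).const_mul _
  refine hb.mono' ?_ (Filter.Eventually.of_forall fun t => ?_)
  · exact (Real.continuous_exp.comp (continuous_const.mul continuous_abs)).aestronglyMeasurable.mul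
      ((measurable_gaussianPDF 0 1).ennreal_toReal.aestronglyMeasurable)
  · have hpdf : (gaussianPDF 0 1 t).toReal = gaussianPDFReal 0 1 t :=
      ENNReal.toReal_ofReal (gaussianPDFReal_nonneg 0 1 t)
    rw [Real.norm_eq_abs, abs_of_nonneg (by positivity :
      (0:ℝ) ≤ Real.exp (2 * |t|) * (gaussianPDF 0 1 t).toReal), hpdf]
    unfold gaussianPDFReal
    push_cast
    simp only [mul_one, sub_zero]
    have h1 : Real.exp (2 * |t|) * ((Real.sqrt (2 * Real.pi))⁻¹ * Real.exp (-t ^ 2 / 2))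
        = (Real.sqrt (2 * Real.pi))⁻¹ * Real.exp (2 * |t| + -t ^ 2 / 2) := by
      rw [Real.exp_add]; ring
    rw [h1, mul_assoc]
    refine mul_le_mul_of_nonneg_left ?_ (by positivity)
    rw [← Real.exp_add]
    refine Real.exp_le_exp.mpr ?_
    nlinarith [sq_nonneg (|t| - 4), sq_abs t]

lemma gauss_integrable_id : Integrable (fun t : ℝ => t) (gaussianReal 0 1) := by
  refine gauss_integrable_exp_two_abs.mono' measurable_id.aestronglyMeasurable
    (Filter.Eventually.of_forall fun t => ?_)
  rw [Real.norm_eq_abs]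
  have h1 := Real.add_one_le_exp |t|
  have h2 : Real.exp |t| ≤ Real.exp (2 * |t|) :=
    Real.exp_le_exp.mpr (by nlinarith [abs_nonneg t])
  linarith

lemma gauss_integral_id : ∫ t, t ∂(gaussianReal 0 1) = 0 := by
  rw [gaussianReal_of_var_ne_zero 0 one_ne_zero]
  have hcoe : Measure.withDensity volume (gaussianPDF 0 1) =
      Measure.withDensity volume (fun x => ((gaussianPDF 0 1 x).toNNReal : ℝ≥0∞)) := by
    refine withDensity_congr_ae (Filter.Eventually.of_forall fun x => ?_)
    exact (ENNReal.coe_toNNReal ENNReal.ofReal_ne_top).symm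
  rw [hcoe, integral_withDensity_eq_integral_smul
    (measurable_gaussianPDF 0 1).ennreal_toNNReal (fun t => t)]
  simp only [NNReal.smul_def]
  have hodd : ∀ t : ℝ, (((gaussianPDF 0 1 (-t)).toNNReal : ℝ)) * (-t) =
      -((((gaussianPDF 0 1 t).toNNReal : ℝ)) * t) := by
    intro t
    have : gaussianPDF 0 1 (-t) = gaussianPDF 0 1 t := by
      unfold gaussianPDF gaussianPDFReal
      norm_num
    rw [this]; ring
  have h2 : ∫ t : ℝ, (((gaussianPDF 0 1 (-t)).toNNReal : ℝ)) * (-t) =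
      ∫ t : ℝ, (((gaussianPDF 0 1 t).toNNReal : ℝ)) * t :=
    integral_neg_eq_self (fun t : ℝ => (((gaussianPDF 0 1 t).toNNReal : ℝ)) * t) volume
  rw [integral_congr_ae (Filter.Eventually.of_forall hodd), integral_neg] at h2
  have : ∫ t : ℝ, (((gaussianPDF 0 1 t).toNNReal : ℝ)) * t = 0 := by linarith
  simpa [smul_eq_mul] using this


variable {d : ℕ}

noncomputable abbrev gaussPi (d : ℕ) : Measure (Fin d → ℝ) :=
  Measure.pi fun _ : Fin d => gaussianReal 0 1

lemma pi_integrable_prod {g : Fin d → ℝ → ℝ}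
    (hg : ∀ i, Integrable (g i) (gaussianReal 0 1)) :
    Integrable (fun x : Fin d → ℝ => ∏ i, g i (x i)) (gaussPi d) := by
  letI : MeasureSpace ℝ := ⟨gaussianReal 0 1⟩
  haveI : SigmaFinite (volume : Measure ℝ) := by
    show SigmaFinite (gaussianReal 0 1); infer_instance
  exact MeasureTheory.Integrable.fintype_prod hg

lemma pi_integral_prod (g : Fin d → ℝ → ℝ) :
    ∫ x : Fin d → ℝ, ∏ i, g i (x i) ∂(gaussPi d)
      = ∏ i, ∫ t, g i t ∂(gaussianReal 0 1) := by
  letI : MeasureSpace ℝ := ⟨gaussianReal 0 1⟩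
  haveI : SigmaFinite (volume : Measure ℝ) := by
    show SigmaFinite (gaussianReal 0 1); infer_instance
  exact MeasureTheory.integral_fintype_prod_eq_prod g

lemma pi_integrable_coord (i : Fin d) :
    Integrable (fun x : Fin d → ℝ => x i) (gaussPi d) := by
  have := pi_integrable_prod (d := d) (g := fun j t => if j = i then t else 1) ?_
  · refine this.congr (Filter.Eventually.of_forall fun x => ?_)
    simp [Finset.prod_ite_eq']
  · intro j
    by_cases h : j = i
    · subst h; simpa using gauss_integrable_id
    · simp only [h, if_false]
      exact integrable_const 1

lemma pi_integral_coord (i : Fin d) :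
    ∫ x : Fin d → ℝ, x i ∂(gaussPi d) = 0 := by
  have h := pi_integral_prod (d := d) (fun j t => if j = i then t else 1)
  have h1 : ∀ x : Fin d → ℝ, (∏ j, if j = i then x j else 1) = x i := by
    intro x; simp [Finset.prod_ite_eq']
  simp only [h1] at h
  rw [h]
  refine Finset.prod_eq_zero (Finset.mem_univ i) ?_
  simp [gauss_integral_id]

lemma euclid_norm_le_sum_abs (x : Fin d → ℝ) :
    ‖(EuclideanSpace.equiv (Fin d) ℝ).symm x‖ ≤ ∑ i, |x i| := by
  rw [EuclideanSpace.norm_eq]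
  have hterm : ∀ i, ‖(EuclideanSpace.equiv (Fin d) ℝ).symm x i‖ ^ 2 = x i ^ 2 := by
    intro i; rw [Real.norm_eq_abs, sq_abs]; rfl
  simp only [hterm]
  have hsum : ∑ i, x i ^ 2 ≤ (∑ i, |x i|) ^ 2 := by
    have hle : ∀ i ∈ Finset.univ, x i ^ 2 ≤ |x i| * ∑ j, |x j| := by
      intro i _
      have h1 : |x i| ≤ ∑ j, |x j| :=
        Finset.single_le_sum (fun j _ => abs_nonneg (x j)) (Finset.mem_univ i)
      calc x i ^ 2 = |x i| * |x i| := by rw [← sq_abs]; ring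
        _ ≤ |x i| * ∑ j, |x j| := mul_le_mul_of_nonneg_left h1 (abs_nonneg _)
    calc ∑ i, x i ^ 2 ≤ ∑ i, |x i| * ∑ j, |x j| := Finset.sum_le_sum hle
      _ = (∑ i, |x i|) ^ 2 := by rw [← Finset.sum_mul]; ring
  calc Real.sqrt (∑ i, x i ^ 2) ≤ Real.sqrt ((∑ i, |x i|) ^ 2) := Real.sqrt_le_sqrt hsum
    _ = ∑ i, |x i| := Real.sqrt_sq (Finset.sum_nonneg fun i _ => abs_nonneg _)

noncomputable def mequiv (d : ℕ) : (Fin d → ℝ) ≃ᵐ EuclideanSpace ℝ (Fin d) :=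
  (EuclideanSpace.equiv (Fin d) ℝ).symm.toHomeomorph.toMeasurableEquiv

lemma mequiv_coe (d : ℕ) : ⇑(mequiv d) = ⇑(EuclideanSpace.equiv (Fin d) ℝ).symm := rfl

lemma std_pres (d : ℕ) : MeasurePreserving (mequiv d) (gaussPi d) (stdGaussian d) :=
  ⟨(mequiv d).measurable, rfl⟩

instance std_prob (d : ℕ) : IsProbabilityMeasure (stdGaussian d) := by
  rw [show stdGaussian d = Measure.map (mequiv d) (gaussPi d) from rfl]
  exact Measure.isProbabilityMeasure_map (mequiv d).measurable.aemeasurable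

lemma std_integral {d : ℕ} (h : EuclideanSpace ℝ (Fin d) → ℝ) :
    ∫ ξ, h ξ ∂(stdGaussian d) = ∫ x, h (mequiv d x) ∂(gaussPi d) :=
  ((std_pres d).integral_comp (mequiv d).measurableEmbedding h).symm

lemma std_integrable_iff {d : ℕ} (h : EuclideanSpace ℝ (Fin d) → ℝ) :
    Integrable h (stdGaussian d) ↔ Integrable (fun x => h (mequiv d x)) (gaussPi d) :=
  ((std_pres d).integrable_comp_emb (mequiv d).measurableEmbedding).symm

lemma std_integrable_exp (d : ℕ) :
    Integrable (fun ξ : EuclideanSpace ℝ (Fin d) => Real.exp (2 * ‖ξ‖)) (stdGaussian d) := by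
  rw [std_integrable_iff]
  have hprod : Integrable (fun x : Fin d → ℝ => ∏ i, Real.exp (2 * |x i|)) (gaussPi d) :=
    pi_integrable_prod fun i => gauss_integrable_exp_two_abs
  simp only [mequiv_coe]
  refine hprod.mono' ?_ (Filter.Eventually.of_forall fun x => ?_)
  · exact (Real.continuous_exp.comp (continuous_const.mul
      (continuous_norm.comp (EuclideanSpace.equiv (Fin d) ℝ).symm.continuous))).aestronglyMeasurable
  · rw [Real.norm_eq_abs, abs_of_nonneg (Real.exp_pos _).le, ← Real.exp_sum]
    refine Real.exp_le_exp.mpr ?_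
    rw [← Finset.mul_sum]
    have := euclid_norm_le_sum_abs x
    nlinarith [Finset.sum_nonneg (fun i (_ : i ∈ Finset.univ) => abs_nonneg (x i)),
      norm_nonneg ((EuclideanSpace.equiv (Fin d) ℝ).symm x)]

lemma std_integral_linear {d : ℕ} (T : EuclideanSpace ℝ (Fin d) →L[ℝ] ℝ) :
    ∫ ξ, T ξ ∂(stdGaussian d) = 0 := by
  rw [std_integral]
  have key : ∀ x : Fin d → ℝ, T (mequiv d x)
      = ∑ i, x i * T (mequiv d ((Pi.single i (1:ℝ) : Fin d → ℝ))) := by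
    intro x
    have hx : x = ∑ i, x i • (Pi.single i (1:ℝ) : Fin d → ℝ) := by
      funext j
      rw [Finset.sum_apply]
      simp [Pi.single_apply, mul_ite, Finset.sum_ite_eq]
    rw [mequiv_coe]
    conv_lhs => rw [hx]
    simp [map_sum, _root_.map_smul, smul_eq_mul, mequiv_coe]
  have hfun : (fun x : Fin d → ℝ => T (mequiv d x))
      = fun x => ∑ i, x i * T (mequiv d ((Pi.single i (1:ℝ) : Fin d → ℝ))) := funext key
  rw [hfun]
  rw [integral_finset_sum _ (fun i _ => (pi_integrable_coord i).mul_const _)]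
  refine Finset.sum_eq_zero fun i _ => ?_
  rw [integral_mul_const, pi_integral_coord]
  ring

set_option maxHeartbeats 1000000 in
/-- Expansion of the denominator of the consensus-hopping update: there is a constant
`C > 0` depending only on `d` such that for all `G`, `M`, every `C²` function `f` with
`‖∇f‖ ≤ G`, `‖D²f‖ ≤ M`, all `c`, and all `α > 0`, `σ̃ > 0` with `αGσ̃ ≤ 1`,
`|∫ exp(−αf(c+σ̃ξ)) dπ(ξ) − exp(−αf(c))| ≤ C exp(−αf(c)) σ̃² (α²G² + αM)`. -/
theorem consensus_hopping_denominator_expansion (d : ℕ) :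
    ∃ C : ℝ, 0 < C ∧
      ∀ (G M : ℝ) (f : EuclideanSpace ℝ (Fin d) → ℝ), ContDiff ℝ 2 f →
        (∀ x, ‖gradient f x‖ ≤ G) →
        (∀ x, ‖fderiv ℝ (fderiv ℝ f) x‖ ≤ M) →
        ∀ (c : EuclideanSpace ℝ (Fin d)) (α σ : ℝ), 0 < α → 0 < σ →
          α * G * σ ≤ 1 →
          |(∫ ξ, Real.exp (-(α * f (c + σ • ξ))) ∂(stdGaussian d)) -
              Real.exp (-(α * f c))| ≤
            C * Real.exp (-(α * f c)) * (σ ^ 2 * (α ^ 2 * G ^ 2 + α * M)) := by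
  classical
  set K : ℝ := ∫ ξ, Real.exp (2 * ‖ξ‖) ∂(stdGaussian d) with hKdef
  have hK0 : 0 ≤ K := integral_nonneg fun ξ => (Real.exp_pos _).le
  refine ⟨4 * K + 1, by positivity, ?_⟩
  intro G M f hf hG hM c α σ hα hσ hαGσ
  have hG0 : 0 ≤ G := le_trans (norm_nonneg _) (hG 0)
  have hM0 : 0 ≤ M := le_trans (norm_nonneg (fderiv ℝ (fderiv ℝ f) 0)) (hM 0)
  have hfd : ∀ x, ‖fderiv ℝ f x‖ ≤ G := norm_fderiv_le_of_grad hG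
  have hexpν := std_integrable_exp d
  set A : EuclideanSpace ℝ (Fin d) → ℝ :=
    fun ξ => Real.exp (-(α * (f (c + σ • ξ) - f c))) with hAdef
  -- basic estimates on the increment
  have hnorm : ∀ ξ : EuclideanSpace ℝ (Fin d), ‖(c + σ • ξ) - c‖ = σ * ‖ξ‖ := by
    intro ξ
    rw [add_sub_cancel_left, norm_smul, Real.norm_eq_abs, abs_of_pos hσ]
  have hΔ : ∀ ξ : EuclideanSpace ℝ (Fin d),
      |f (c + σ • ξ) - f c| ≤ G * (σ * ‖ξ‖) := by
    intro ξ
    have := mvt_bound hf hfd c (c + σ • ξ)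
    rwa [hnorm ξ] at this
  have hTay : ∀ ξ : EuclideanSpace ℝ (Fin d),
      |f (c + σ • ξ) - f c - σ * fderiv ℝ f c ξ| ≤ M * (σ * ‖ξ‖) ^ 2 := by
    intro ξ
    have h2 := taylor_two_bound hf hM c (c + σ • ξ)
    rw [hnorm ξ] at h2
    have h3 : fderiv ℝ f c ((c + σ • ξ) - c) = σ * fderiv ℝ f c ξ := by
      rw [add_sub_cancel_left, _root_.map_smul, smul_eq_mul]
    rwa [h3] at h2
  have hαΔ : ∀ ξ : EuclideanSpace ℝ (Fin d), |α * (f (c + σ • ξ) - f c)| ≤ ‖ξ‖ := by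
    intro ξ
    rw [abs_mul, abs_of_pos hα]
    calc α * |f (c + σ • ξ) - f c| ≤ α * (G * (σ * ‖ξ‖)) := by
          have := hΔ ξ; nlinarith
      _ = (α * G * σ) * ‖ξ‖ := by ring
      _ ≤ 1 * ‖ξ‖ := mul_le_mul_of_nonneg_right hαGσ (norm_nonneg ξ)
      _ = ‖ξ‖ := one_mul _
  -- pointwise bound
  have hptwise : ∀ ξ : EuclideanSpace ℝ (Fin d),
      |A ξ - 1 + α * σ * fderiv ℝ f c ξ|
        ≤ (4 * (σ ^ 2 * (α ^ 2 * G ^ 2 + α * M))) * Real.exp (2 * ‖ξ‖) := by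
    intro ξ
    set Δ : ℝ := f (c + σ • ξ) - f c with hΔdef
    set x₀ : ℝ := -(α * Δ) with hx₀def
    have hid : A ξ - 1 + α * σ * fderiv ℝ f c ξ
        = (Real.exp x₀ - 1 - x₀) + (-(α * (Δ - σ * fderiv ℝ f c ξ))) := by
      rw [hAdef, hx₀def, hΔdef]; ring
    have h1 : |Real.exp x₀ - 1 - x₀| ≤ x₀ ^ 2 * Real.exp |x₀| :=
      abs_exp_sub_one_sub_le' x₀
    have hx₀abs : |x₀| ≤ ‖ξ‖ := by rw [hx₀def, abs_neg]; exact hαΔ ξ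
    have hx₀sq : x₀ ^ 2 ≤ α ^ 2 * G ^ 2 * (σ ^ 2 * ‖ξ‖ ^ 2) := by
      have h4 : |x₀| ≤ α * (G * (σ * ‖ξ‖)) := by
        rw [hx₀def, abs_neg, abs_mul, abs_of_pos hα]
        have := hΔ ξ; nlinarith
      nlinarith [abs_nonneg x₀, sq_abs x₀]
    have hexp1 : (1:ℝ) ≤ Real.exp ‖ξ‖ := Real.one_le_exp (norm_nonneg ξ)
    have hsq4 : ‖ξ‖ ^ 2 * Real.exp ‖ξ‖ ≤ 4 * Real.exp (2 * ‖ξ‖) := by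
      have h5 := sq_le_four_exp ‖ξ‖ (norm_nonneg ξ)
      have h6 : Real.exp ‖ξ‖ * Real.exp ‖ξ‖ = Real.exp (2 * ‖ξ‖) := by
        rw [← Real.exp_add]; ring_nf
      nlinarith [Real.exp_pos ‖ξ‖]
    calc |A ξ - 1 + α * σ * fderiv ℝ f c ξ|
        ≤ |Real.exp x₀ - 1 - x₀| + |(-(α * (Δ - σ * fderiv ℝ f c ξ)))| := by
          rw [hid]; exact abs_add_le _ _
      _ ≤ x₀ ^ 2 * Real.exp |x₀| + α * (M * (σ * ‖ξ‖) ^ 2) := by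
          refine add_le_add h1 ?_
          rw [abs_neg, abs_mul, abs_of_pos hα]
          have := hTay ξ
          nlinarith
      _ ≤ (α ^ 2 * G ^ 2 * (σ ^ 2 * ‖ξ‖ ^ 2)) * Real.exp ‖ξ‖
            + (α * M * σ ^ 2) * (‖ξ‖ ^ 2 * Real.exp ‖ξ‖) := by
          refine add_le_add ?_ ?_
          · refine mul_le_mul hx₀sq (Real.exp_le_exp.mpr hx₀abs) (Real.exp_pos _).le ?_
            positivity
          · have hnn : 0 ≤ α * M * σ ^ 2 * ‖ξ‖ ^ 2 := by positivity
            nlinarith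
      _ = (σ ^ 2 * (α ^ 2 * G ^ 2 + α * M)) * (‖ξ‖ ^ 2 * Real.exp ‖ξ‖) := by ring
      _ ≤ (σ ^ 2 * (α ^ 2 * G ^ 2 + α * M)) * (4 * Real.exp (2 * ‖ξ‖)) := by
          refine mul_le_mul_of_nonneg_left hsq4 ?_
          positivity
      _ = (4 * (σ ^ 2 * (α ^ 2 * G ^ 2 + α * M))) * Real.exp (2 * ‖ξ‖) := by ring
  -- integrability
  have hAcont : Continuous A := by
    refine Real.continuous_exp.comp (Continuous.neg ?_)
    have hfc := hf.continuous
    fun_prop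
  have hintA : Integrable A (stdGaussian d) := by
    refine hexpν.mono' hAcont.aestronglyMeasurable (Filter.Eventually.of_forall fun ξ => ?_)
    rw [Real.norm_eq_abs, abs_of_pos (Real.exp_pos _)]
    show Real.exp (-(α * (f (c + σ • ξ) - f c))) ≤ Real.exp (2 * ‖ξ‖)
    refine Real.exp_le_exp.mpr ?_
    have h7 := hαΔ ξ
    have h8 := abs_nonneg (α * (f (c + σ • ξ) - f c))
    have h9 := neg_abs_le (α * (f (c + σ • ξ) - f c))
    nlinarith [norm_nonneg ξ]
  have hintT : Integrable (fun ξ => α * σ * fderiv ℝ f c ξ) (stdGaussian d) := by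
    refine (hexpν.const_mul (α * σ * ‖fderiv ℝ f c‖)).mono'
      ((continuous_const.mul (fderiv ℝ f c).cont).aestronglyMeasurable)
      (Filter.Eventually.of_forall fun ξ => ?_)
    rw [Real.norm_eq_abs, abs_mul, abs_mul, abs_of_pos hα, abs_of_pos hσ]
    have h10 : |fderiv ℝ f c ξ| ≤ ‖fderiv ℝ f c‖ * ‖ξ‖ := (fderiv ℝ f c).le_opNorm ξ
    have h11 : ‖ξ‖ ≤ Real.exp (2 * ‖ξ‖) := by
      have := abs_le_exp_two_mul ‖ξ‖
      rwa [abs_of_nonneg (norm_nonneg ξ)] at this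
    have h12 : (0:ℝ) ≤ ‖fderiv ℝ f c‖ := norm_nonneg _
    have e1 : |fderiv ℝ f c ξ| ≤ ‖fderiv ℝ f c‖ * Real.exp (2 * ‖ξ‖) :=
      h10.trans (mul_le_mul_of_nonneg_left h11 h12)
    have e2 := mul_le_mul_of_nonneg_left e1 (by positivity : (0:ℝ) ≤ α * σ)
    nlinarith
  have hT0 : ∫ ξ, α * σ * fderiv ℝ f c ξ ∂(stdGaussian d) = 0 := by
    rw [integral_const_mul, std_integral_linear (fderiv ℝ f c), mul_zero]
  -- split the integral
  have hsplit : (∫ ξ, A ξ ∂(stdGaussian d)) - 1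
      = ∫ ξ, (A ξ - 1 + α * σ * fderiv ℝ f c ξ) ∂(stdGaussian d) := by
    have h1 : Integrable (fun ξ => A ξ - 1) (stdGaussian d) := by
      exact hintA.sub (integrable_const 1)
    rw [integral_add h1 hintT, integral_sub hintA (integrable_const 1), integral_const, hT0]
    simp [measure_univ]
  have hbound : |(∫ ξ, A ξ ∂(stdGaussian d)) - 1|
      ≤ (4 * (σ ^ 2 * (α ^ 2 * G ^ 2 + α * M))) * K := by
    rw [hsplit]
    have h13 := norm_integral_le_of_norm_le
      (hexpν.const_mul (4 * (σ ^ 2 * (α ^ 2 * G ^ 2 + α * M))))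
      (Filter.Eventually.of_forall fun ξ => by
        rw [Real.norm_eq_abs]; exact hptwise ξ)
    rw [Real.norm_eq_abs, integral_const_mul] at h13
    exact h13
  -- conclusion
  have hfactor : (∫ ξ, Real.exp (-(α * f (c + σ • ξ))) ∂(stdGaussian d))
      = Real.exp (-(α * f c)) * ∫ ξ, A ξ ∂(stdGaussian d) := by
    rw [← integral_const_mul]
    refine integral_congr_ae (Filter.Eventually.of_forall fun ξ => ?_)
    simp only [hAdef, ← Real.exp_add]
    congr 1
    ring
  rw [hfactor]
  have hE := Real.exp_pos (-(α * f c))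
  have h14 : Real.exp (-(α * f c)) * (∫ ξ, A ξ ∂(stdGaussian d)) - Real.exp (-(α * f c))
      = Real.exp (-(α * f c)) * ((∫ ξ, A ξ ∂(stdGaussian d)) - 1) := by ring
  rw [h14, abs_mul, abs_of_pos hE]
  have hstuff : 0 ≤ σ ^ 2 * (α ^ 2 * G ^ 2 + α * M) := by positivity
  calc Real.exp (-(α * f c)) * |(∫ ξ, A ξ ∂(stdGaussian d)) - 1|
      ≤ Real.exp (-(α * f c)) * ((4 * (σ ^ 2 * (α ^ 2 * G ^ 2 + α * M))) * K) :=
        mul_le_mul_of_nonneg_left hbound hE.le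
    _ ≤ (4 * K + 1) * Real.exp (-(α * f c)) * (σ ^ 2 * (α ^ 2 * G ^ 2 + α * M)) := by
        nlinarith
end
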